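/- arXiv:2404.15302 — 2 statements merged into one kernel-verified Lean document; each statement's English description precedes it below -/
import Mathlib

section
/- If the iterate x_{k+1} is an ε_k-suboptimal minimizer of f_{x_k}, then the following inequality holds: (1/m)Σ_{i∈I_in} 1{a_i ∉ W}·|⟨a_i, x_{k+1} - y⟩| - (1/m)Σ_{i∈I_out}|⟨a_i, x_{k+1} - y⟩| ≤ (2/m)Σ_{i∈I_in} 1{a_i ∈ W}·|⟨a_i, y - x_k⟩| + ε_k, where y = φ(x_k)x_star and W = W_{x_k, y}. -/
open scoped RealInnerProductSpace

/-- Sign function with the convention `sgn 0 = 1`, taking values in `{±1}`. -/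
noncomputable def sgn (t : ℝ) : ℝ := if 0 ≤ t then 1 else -1

/-- The sign `φ(x) ∈ {±1}` minimizing `‖x - α • xs‖`. -/
noncomputable def phi {d : ℕ} (x xs : EuclideanSpace ℝ (Fin d)) : ℝ :=
  if ‖x - xs‖ ≤ ‖x + xs‖ then 1 else -1

/-!
Compare the residuals of `f_{x_k}` at `x_{k+1}` and at `y` term by term; their difference is at
most `ε_k` on average. For an inlier with `sgn ⟨a_i, x_k⟩ = sgn ⟨a_i, y⟩` the residual at `y`
vanishes (as `b_i = |⟨a_i, x_star⟩| = |⟨a_i, y⟩|`), so the term at `x_{k+1}` is exactly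
`|⟨a_i, x_{k+1} - y⟩|`. For an inlier in the wedge the residual at `y` is `2 |⟨a_i, y⟩|`, which is
at most `2 |⟨a_i, y - x_k⟩|` because `⟨a_i, y⟩` and `⟨a_i, x_k⟩` have opposite signs. For an
outlier, the triangle inequality bounds the loss by `|⟨a_i, x_{k+1} - y⟩|`.
-/

lemma sgn_mul_self (t : ℝ) : sgn t * t = |t| := by
  unfold sgn
  split_ifs with h
  · rw [one_mul, abs_of_nonneg h]
  · rw [neg_one_mul, abs_of_neg (not_le.mp h)]

lemma abs_sgn (t : ℝ) : |sgn t| = 1 := by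
  unfold sgn
  split_ifs <;> simp

lemma abs_sgn_mul_sub_sgn_mul (t u v : ℝ) : |sgn t * u - sgn t * v| = |u - v| := by
  rw [← mul_sub, abs_mul, abs_sgn, one_mul]

lemma abs_phi {d : ℕ} (x xs : EuclideanSpace ℝ (Fin d)) : |phi x xs| = 1 := by
  unfold phi
  split_ifs <;> simp

lemma nonneg_and_neg_of_sgn_ne {t v : ℝ} (h : sgn t ≠ sgn v) :
    (0 ≤ t ∧ v < 0) ∨ (t < 0 ∧ 0 ≤ v) := by
  unfold sgn at h
  by_cases ht : 0 ≤ t <;> by_cases hv : 0 ≤ v <;> simp_all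

lemma sgn_mul_eq_neg_abs_of_sgn_ne {t v : ℝ} (h : sgn t ≠ sgn v) : sgn t * v = -|v| := by
  rcases nonneg_and_neg_of_sgn_ne h with ⟨ht, hv⟩ | ⟨ht, hv⟩
  · simp [sgn, ht, abs_of_neg hv]
  · simp [sgn, not_le.mpr ht, abs_of_nonneg hv]

lemma abs_le_abs_sub_of_sgn_ne {t v : ℝ} (h : sgn t ≠ sgn v) : |v| ≤ |v - t| := by
  rcases nonneg_and_neg_of_sgn_ne h with ⟨ht, hv⟩ | ⟨ht, hv⟩
  · rw [abs_of_neg hv, abs_of_neg (by linarith)]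
    linarith
  · rw [abs_of_nonneg hv, abs_of_pos (by linarith)]
    linarith

lemma inlier_residual_gap (t u v : ℝ) :
    (if sgn t = sgn v then |u - v| else 0) - 2 * (if sgn t = sgn v then 0 else |v - t|) ≤
      abs (sgn t * u - |v|) - abs (sgn t * v - |v|) := by
  by_cases h : sgn t = sgn v
  · rw [if_pos h, if_pos h, h, ← sgn_mul_self v, abs_sgn_mul_sub_sgn_mul]
    simp
  · rw [if_neg h, if_neg h, sgn_mul_eq_neg_abs_of_sgn_ne h,
      abs_of_nonpos (by linarith [abs_nonneg v] : -|v| - |v| ≤ 0)]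
    linarith [abs_le_abs_sub_of_sgn_ne h, abs_nonneg (sgn t * u - |v|)]

lemma outlier_residual_gap (t u v b : ℝ) :
    -|u - v| ≤ |sgn t * u - b| - |sgn t * v - b| := by
  have h := abs_sub_abs_le_abs_sub (sgn t * v - b) (sgn t * u - b)
  rw [sub_sub_sub_cancel_right, abs_sgn_mul_sub_sgn_mul, abs_sub_comm v] at h
  linarith

lemma Finset.sum_add_sum_le_sum_of_disjoint_union {ι M : Type*} [Fintype ι] [DecidableEq ι]
    [AddCommMonoid M] [PartialOrder M] [IsOrderedAddMonoid M] {s t : Finset ι}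
    (hdisj : Disjoint s t) (hunion : s ∪ t = Finset.univ) {f g h : ι → M}
    (hf : ∀ i ∈ s, f i ≤ h i) (hg : ∀ i ∈ t, g i ≤ h i) :
    ∑ i ∈ s, f i + ∑ i ∈ t, g i ≤ ∑ i, h i := by
  rw [← hunion, Finset.sum_union hdisj]
  exact add_le_add (Finset.sum_le_sum hf) (Finset.sum_le_sum hg)

theorem suboptimality_implies_key_inequality_general {d m : ℕ}
    (a : Fin m → EuclideanSpace ℝ (Fin d))
    (Iin Iout : Finset (Fin m))
    (hdisj : Disjoint Iin Iout) (hunion : Iin ∪ Iout = Finset.univ)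
    (xstar xk x1 y : EuclideanSpace ℝ (Fin d))
    (b : Fin m → ℝ) (ε : ℝ)
    (hy : y = phi xk xstar • xstar)
    (hbin : ∀ i ∈ Iin, b i = abs ⟪a i, xstar⟫)
    (hsubopt : (1 / (m : ℝ)) * ∑ i, abs (sgn ⟪a i, xk⟫ * ⟪a i, x1⟫ - b i) ≤
      (1 / (m : ℝ)) * ∑ i, abs (sgn ⟪a i, xk⟫ * ⟪a i, y⟫ - b i) + ε) :
    (1 / (m : ℝ)) * ∑ i ∈ Iin,
        (if sgn ⟪a i, xk⟫ = sgn ⟪a i, y⟫ then abs ⟪a i, x1 - y⟫ else 0) -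
      (1 / (m : ℝ)) * ∑ i ∈ Iout, abs ⟪a i, x1 - y⟫ ≤
    (2 / (m : ℝ)) * ∑ i ∈ Iin,
        (if sgn ⟪a i, xk⟫ = sgn ⟪a i, y⟫ then 0 else abs ⟪a i, y - xk⟫) + ε := by
  have hb : ∀ i ∈ Iin, b i = |⟪a i, y⟫| := fun i hi => by
    rw [hbin i hi, hy, real_inner_smul_right, abs_mul, abs_phi, one_mul]
  have hgap : ∑ i ∈ Iin, ((if sgn ⟪a i, xk⟫ = sgn ⟪a i, y⟫ then |⟪a i, x1 - y⟫| else 0) -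
        2 * (if sgn ⟪a i, xk⟫ = sgn ⟪a i, y⟫ then 0 else |⟪a i, y - xk⟫|)) +
      ∑ i ∈ Iout, -|⟪a i, x1 - y⟫| ≤
      ∑ i, (|sgn ⟪a i, xk⟫ * ⟪a i, x1⟫ - b i| - |sgn ⟪a i, xk⟫ * ⟪a i, y⟫ - b i|) := by
    refine Finset.sum_add_sum_le_sum_of_disjoint_union hdisj hunion
      (fun i hi => ?_) (fun i _ => ?_)
    · simpa only [hb i hi, inner_sub_right] using inlier_residual_gap _ _ _
    · simpa only [inner_sub_right] using outlier_residual_gap _ _ _ (b i)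
  rw [Finset.sum_sub_distrib, Finset.sum_sub_distrib, Finset.sum_neg_distrib,
    ← Finset.mul_sum] at hgap
  have hscaled := mul_le_mul_of_nonneg_left hgap (by positivity : (0 : ℝ) ≤ 1 / m)
  linear_combination hscaled + hsubopt

theorem suboptimality_implies_key_inequality {d m : ℕ} (hm : 0 < m)
    (a : Fin m → EuclideanSpace ℝ (Fin d))
    (Iin Iout : Finset (Fin m))
    (hdisj : Disjoint Iin Iout) (hunion : Iin ∪ Iout = Finset.univ)
    (xstar xk x1 y : EuclideanSpace ℝ (Fin d))
    (b ξ : Fin m → ℝ) (ε : ℝ)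
    (hy : y = phi xk xstar • xstar)
    (hbin : ∀ i ∈ Iin, b i = abs ⟪a i, xstar⟫)
    (hbout : ∀ i ∈ Iout, b i = ξ i)
    (hne : ∀ i : Fin m, ⟪a i, xk⟫ ≠ 0 ∧ ⟪a i, y⟫ ≠ 0)
    (hsubopt : (1 / (m : ℝ)) * ∑ i, abs (sgn ⟪a i, xk⟫ * ⟪a i, x1⟫ - b i) ≤
      (1 / (m : ℝ)) * ∑ i, abs (sgn ⟪a i, xk⟫ * ⟪a i, y⟫ - b i) + ε) :
    (1 / (m : ℝ)) * ∑ i ∈ Iin,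
        (if sgn ⟪a i, xk⟫ = sgn ⟪a i, y⟫ then abs ⟪a i, x1 - y⟫ else 0) -
      (1 / (m : ℝ)) * ∑ i ∈ Iout, abs ⟪a i, x1 - y⟫ ≤
    (2 / (m : ℝ)) * ∑ i ∈ Iin,
        (if sgn ⟪a i, xk⟫ = sgn ⟪a i, y⟫ then 0 else abs ⟪a i, y - xk⟫) + ε :=
  suboptimality_implies_key_inequality_general a Iin Iout hdisj hunion xstar xk x1 y b ε hy hbin
    hsubopt
end

section
/- Deterministic error-reduction lemma: Suppose the three uniform bounds hold: (i) inf over wedges W ∈ 𝒲_θ and unit z of (1/m)Σ_{i∈I_in}1{a_i∉W}|⟨a_i,z⟩| ≥ A, (ii) sup over unit z of (1/m)Σ_{i∈I_out}|⟨a_i,z⟩| ≤ B, (iii) sup over W ∈ 𝒲_θ and unit z of (1/m)Σ_{i∈I_in}1{a_i∈W}|⟨a_i,z⟩| ≤ C, with A - B > C > 0. If x_{k+1} satisfies (1/m)Σ_{i∈I_in}1{a_i∉W}|⟨a_i,x_{k+1}-y⟩| - (1/m)Σ_{i∈I_out}|⟨a_i,x_{k+1}-y⟩| ≤ (2/m)Σ_{i∈I_in}1{a_i∈W}|⟨a_i,y-x_k⟩|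 + ε_k with W = W_{x_k,y} ∈ 𝒲_θ and y = φ(x_k)x_star, then ‖x_{k+1} - y‖₂ ≤ (2C/(A-B))·‖x_k - y‖₂ + ε_k/(A-B). -/
open scoped RealInnerProductSpace

/-- Deterministic error-reduction lemma for Robust-AM. -/
theorem error_reduction {d m : ℕ} (hm : 0 < m)
    (a : Fin m → EuclideanSpace ℝ (Fin d))
    (Iin Iout : Finset (Fin m))
    (hdisj : Disjoint Iin Iout) (hunion : Iin ∪ Iout = Finset.univ)
    (θ A B C ε : ℝ) (hθ : 0 < θ)
    (xstar xk x1 y : EuclideanSpace ℝ (Fin d))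
    (hy : y = phi xk xstar • xstar)
    (hxk : xk ≠ 0) (hyne : y ≠ 0)
    (hangle : InnerProductGeometry.angle xk y ≤ θ)
    -- (i) uniform lower bound off the wedges of angle at most θ
    (hA : ∀ u v : EuclideanSpace ℝ (Fin d), u ≠ 0 → v ≠ 0 →
      InnerProductGeometry.angle u v ≤ θ →
      ∀ z : EuclideanSpace ℝ (Fin d), ‖z‖ = 1 →
        A ≤ (1 / (m : ℝ)) * ∑ i ∈ Iin,
          (if sgn ⟪a i, u⟫ = sgn ⟪a i, v⟫ then abs ⟪a i, z⟫ else 0))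
    -- (ii) uniform upper bound on the outlier sum
    (hB : ∀ z : EuclideanSpace ℝ (Fin d), ‖z‖ = 1 →
      (1 / (m : ℝ)) * ∑ i ∈ Iout, abs ⟪a i, z⟫ ≤ B)
    -- (iii) uniform upper bound on the wedge sum
    (hC : ∀ u v : EuclideanSpace ℝ (Fin d), u ≠ 0 → v ≠ 0 →
      InnerProductGeometry.angle u v ≤ θ →
      ∀ z : EuclideanSpace ℝ (Fin d), ‖z‖ = 1 →
        (1 / (m : ℝ)) * ∑ i ∈ Iin,
          (if sgn ⟪a i, u⟫ = sgn ⟪a i, v⟫ then 0 else abs ⟪a i, z⟫) ≤ C)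
    (hCpos : 0 < C) (hgap : C < A - B) (hε : 0 ≤ ε)
    -- the key inequality satisfied by the next iterate
    (hkey : (1 / (m : ℝ)) * ∑ i ∈ Iin,
        (if sgn ⟪a i, xk⟫ = sgn ⟪a i, y⟫ then abs ⟪a i, x1 - y⟫ else 0) -
      (1 / (m : ℝ)) * ∑ i ∈ Iout, abs ⟪a i, x1 - y⟫ ≤
      (2 / (m : ℝ)) * ∑ i ∈ Iin,
        (if sgn ⟪a i, xk⟫ = sgn ⟪a i, y⟫ then 0 else abs ⟪a i, y - xk⟫) + ε) :
    ‖x1 - y‖ ≤ (2 * C / (A - B)) * ‖xk - y‖ + ε / (A - B) := by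

  have hAB : 0 < A - B := lt_trans hCpos hgap
  -- scaled bounds
  have habs : ∀ (v : EuclideanSpace ℝ (Fin d)) (i : Fin m),
      |⟪a i, ‖v‖⁻¹ • v⟫| = ‖v‖⁻¹ * |⟪a i, v⟫| := by
    intro v i
    rw [real_inner_smul_right, abs_mul, abs_inv, abs_norm]
  have hAv : A * ‖x1 - y‖ ≤ (1 / (m : ℝ)) * ∑ i ∈ Iin,
      (if sgn ⟪a i, xk⟫ = sgn ⟪a i, y⟫ then abs ⟪a i, x1 - y⟫ else 0) := by
    by_cases hv : x1 - y = 0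
    · simp [hv]
    · have hz : ‖(‖x1 - y‖⁻¹ • (x1 - y) : EuclideanSpace ℝ (Fin d))‖ = 1 :=
        norm_smul_inv_norm hv
      have h := hA xk y hxk hyne hangle _ hz
      have hsum : ∑ i ∈ Iin,
          (if sgn ⟪a i, xk⟫ = sgn ⟪a i, y⟫ then abs ⟪a i, ‖x1 - y‖⁻¹ • (x1 - y)⟫ else 0)
          = ‖x1 - y‖⁻¹ * ∑ i ∈ Iin,
          (if sgn ⟪a i, xk⟫ = sgn ⟪a i, y⟫ then abs ⟪a i, x1 - y⟫ else 0) := by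
        rw [Finset.mul_sum]
        refine Finset.sum_congr rfl fun i _ => ?_
        split
        · exact habs _ _
        · exact (mul_zero _).symm
      rw [hsum] at h
      have hn : 0 < ‖x1 - y‖ := norm_pos_iff.mpr hv
      rw [mul_comm A]
      calc ‖x1 - y‖ * A ≤ ‖x1 - y‖ * ((1 / (m : ℝ)) * (‖x1 - y‖⁻¹ * ∑ i ∈ Iin,
            (if sgn ⟪a i, xk⟫ = sgn ⟪a i, y⟫ then abs ⟪a i, x1 - y⟫ else 0))) :=
          mul_le_mul_of_nonneg_left h hn.le
        _ = (1 / (m : ℝ)) * ∑ i ∈ Iin,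
            (if sgn ⟪a i, xk⟫ = sgn ⟪a i, y⟫ then abs ⟪a i, x1 - y⟫ else 0) := by
          field_simp
  have hBv : (1 / (m : ℝ)) * ∑ i ∈ Iout, abs ⟪a i, x1 - y⟫ ≤ B * ‖x1 - y‖ := by
    by_cases hv : x1 - y = 0
    · simp [hv]
    · have hz : ‖(‖x1 - y‖⁻¹ • (x1 - y) : EuclideanSpace ℝ (Fin d))‖ = 1 :=
        norm_smul_inv_norm hv
      have h := hB _ hz
      have hsum : ∑ i ∈ Iout, abs ⟪a i, ‖x1 - y‖⁻¹ • (x1 - y)⟫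
          = ‖x1 - y‖⁻¹ * ∑ i ∈ Iout, abs ⟪a i, x1 - y⟫ := by
        rw [Finset.mul_sum]; exact Finset.sum_congr rfl fun i _ => habs _ i
      rw [hsum] at h
      have hn : 0 < ‖x1 - y‖ := norm_pos_iff.mpr hv
      have := mul_le_mul_of_nonneg_left h hn.le
      calc (1 / (m : ℝ)) * ∑ i ∈ Iout, abs ⟪a i, x1 - y⟫
          = ‖x1 - y‖ * ((1 / (m : ℝ)) * (‖x1 - y‖⁻¹ * ∑ i ∈ Iout, abs ⟪a i, x1 - y⟫)) := by
            field_simp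
        _ ≤ ‖x1 - y‖ * B := this
        _ = B * ‖x1 - y‖ := mul_comm _ _
  have hCw : (1 / (m : ℝ)) * ∑ i ∈ Iin,
      (if sgn ⟪a i, xk⟫ = sgn ⟪a i, y⟫ then 0 else abs ⟪a i, y - xk⟫) ≤ C * ‖y - xk‖ := by
    by_cases hw : y - xk = 0
    · simp [hw]
    · have hz : ‖(‖y - xk‖⁻¹ • (y - xk) : EuclideanSpace ℝ (Fin d))‖ = 1 :=
        norm_smul_inv_norm hw
      have h := hC xk y hxk hyne hangle _ hz
      have hsum : ∑ i ∈ Iin,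
          (if sgn ⟪a i, xk⟫ = sgn ⟪a i, y⟫ then 0 else abs ⟪a i, ‖y - xk‖⁻¹ • (y - xk)⟫)
          = ‖y - xk‖⁻¹ * ∑ i ∈ Iin,
          (if sgn ⟪a i, xk⟫ = sgn ⟪a i, y⟫ then 0 else abs ⟪a i, y - xk⟫) := by
        rw [Finset.mul_sum]
        refine Finset.sum_congr rfl fun i _ => ?_
        split
        · exact (mul_zero _).symm
        · exact habs _ _
      rw [hsum] at h
      have hn : 0 < ‖y - xk‖ := norm_pos_iff.mpr hw
      have := mul_le_mul_of_nonneg_left h hn.le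
      calc (1 / (m : ℝ)) * ∑ i ∈ Iin,
            (if sgn ⟪a i, xk⟫ = sgn ⟪a i, y⟫ then 0 else abs ⟪a i, y - xk⟫)
          = ‖y - xk‖ * ((1 / (m : ℝ)) * (‖y - xk‖⁻¹ * ∑ i ∈ Iin,
            (if sgn ⟪a i, xk⟫ = sgn ⟪a i, y⟫ then 0 else abs ⟪a i, y - xk⟫))) := by
            field_simp
        _ ≤ ‖y - xk‖ * C := this
        _ = C * ‖y - xk‖ := mul_comm _ _
  have hmain : (A - B) * ‖x1 - y‖ ≤ 2 * C * ‖xk - y‖ + ε := by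
    have h2 : (2 / (m : ℝ)) * ∑ i ∈ Iin,
        (if sgn ⟪a i, xk⟫ = sgn ⟪a i, y⟫ then 0 else abs ⟪a i, y - xk⟫)
        = 2 * ((1 / (m : ℝ)) * ∑ i ∈ Iin,
        (if sgn ⟪a i, xk⟫ = sgn ⟪a i, y⟫ then 0 else abs ⟪a i, y - xk⟫)) := by ring
    rw [h2] at hkey
    have hnorm : ‖y - xk‖ = ‖xk - y‖ := norm_sub_rev _ _
    nlinarith [hCw, hAv, hBv]
  have heq : (2 * C / (A - B)) * ‖xk - y‖ + ε / (A - B) = (2 * C * ‖xk - y‖ + ε) / (A - B) := by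
    field_simp
  rw [heq, le_div_iff₀ hAB]
  linarith [hmain]
end
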